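/- Conditional elicitability: if S is a strictly consistent scoring function for a functional T, then the conditional functional x ↦ T(F_{Y|X=x}) minimises the expected score E[S(g(X), Y)] over all measurable functions g: E[S(T(F_{Y|X}), Y)] ≤ E[S(g(X), Y)] for all measurable g with finite expected score. -/
import Mathlib


open MeasureTheory ProbabilityTheory

/-- `S` (with values in `[0,∞]`) is a strictly consistent scoring function for `T` on the
class `M` of laws on `ℝ`. -/
def StrictlyConsistent {α : Type*} (M : Set (Measure ℝ)) (S : α → ℝ → ENNReal)
    (T : Measure ℝ → α) : Prop :=
  ∀ F ∈ M, ∀ z : α,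
    (∫⁻ y, S (T F) y ∂F) ≤ (∫⁻ y, S z y ∂F) ∧
    ((∫⁻ y, S z y ∂F) = (∫⁻ y, S (T F) y ∂F) → z = T F)

/-- Conditional elicitability: if `S` is strictly consistent for `T`, then
`x ↦ T(F_{Y|X=x})` minimises the expected score `E[S(g(X), Y)]` over measurable `g` with
finite expected score. Here the joint law of `(X, Y)` is `ν ⊗ₘ κ`, with `ν` the law of `X`
and `κ` the regular conditional distribution of `Y` given `X`. -/
theorem stmt13 {n : ℕ} {α : Type*} [MeasurableSpace α]
    (M : Set (Measure ℝ)) (S : α → ℝ → ENNReal) (T : Measure ℝ → α)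
    (ν : Measure (Fin n → ℝ)) [IsProbabilityMeasure ν]
    (κ : Kernel (Fin n → ℝ) ℝ) [IsMarkovKernel κ]
    (hS : StrictlyConsistent M S T)
    (hM : ∀ᵐ x ∂ν, κ x ∈ M)
    (hSmeas : Measurable (Function.uncurry S))
    (hTmeas : Measurable fun x => T (κ x))
    (g : (Fin n → ℝ) → α) (hg : Measurable g)
    (hfin : (∫⁻ q, S (g q.1) q.2 ∂(ν ⊗ₘ κ)) < ⊤) :
    (∫⁻ q, S (T (κ q.1)) q.2 ∂(ν ⊗ₘ κ)) ≤ ∫⁻ q, S (g q.1) q.2 ∂(ν ⊗ₘ κ) := by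
  have h1 : Measurable fun q : (Fin n → ℝ) × ℝ => S (T (κ q.1)) q.2 :=
    hSmeas.comp ((hTmeas.comp measurable_fst).prodMk measurable_snd)
  have h2 : Measurable fun q : (Fin n → ℝ) × ℝ => S (g q.1) q.2 :=
    hSmeas.comp ((hg.comp measurable_fst).prodMk measurable_snd)
  rw [Measure.lintegral_compProd h1, Measure.lintegral_compProd h2]
  refine lintegral_mono_ae ?_
  filter_upwards [hM] with x hx
  exact (hS (κ x) hx (g x)).1
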